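/- arXiv:1805.06688 — 3 statements merged into one kernel-verified Lean document; each statement's English description precedes it below -/
import Mathlib

section
/- Let $\mathcal{A}$ be the $(N+1)\times(N+1)$ block unit lower bidiagonal matrix with identity diagonal blocks and subdiagonal blocks $-\Psi_1, \ldots, -\Psi_N$. Partition the time points into C-points $\{0, m, 2m, \ldots, N\}$ (with $m \mid N$) and F-points (the rest), and write $\mathcal{A}$ in the corresponding $2\times 2$ block form $\begin{bmatrix}\mathcal{A}_{FF} & \mathcal{A}_{FC} \\ \mathcal{A}_{CF} & \mathcal{A}_{CC}\end{bmatrix}$. Then the Schur complement $\mathcal{A}_{CC} - \mathcal{A}_{CF}\mathcal{A}_{FF}^{-1}\mathcal{A}_{FC}$ is the block unit lower bidiagonal matrix with identity diagonal blocks and subdiagonal blocks $-\mathcal{B}_{\Psi, km}^m$, where $\mathcal{B}_{\Psi, s}^l = \Psi_s \Psi_{s-1} \cdots \Psi_{s-l+1}$. -/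
/-!
The F-points form runs `{km + 1, …, km + m - 1}` of consecutive indices, so `A_FF` is block
diagonal with unit lower bidiagonal blocks, and its inverse has the entry `Ψ_j ⋯ Ψ_{i+1}` at
`(j, i)` when `i ≤ j` lie in the same run. The C-row `km` of `A` meets the F-points only at
`km - 1` and the C-column `im` only at `im + 1`, so the `(k, i)` entry of `A_CF A_FF⁻¹ A_FC` is
`Ψ_{km} (A_FF⁻¹)_{km-1, im+1} Ψ_{im+1}`, which vanishes unless `k = i + 1` and then equals
`𝓑^m_{Ψ,km}`.
-/

/-- `Bprod Ψ s l = Ψ_s Ψ_{s-1} ⋯ Ψ_{s-l+1}` (with `Bprod Ψ s 0 = 1`). -/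
def Bprod {n : ℕ} (Ψ : ℕ → Matrix (Fin n) (Fin n) ℝ) (s l : ℕ) :
    Matrix (Fin n) (Fin n) ℝ :=
  ((List.range l).map (fun t => Ψ (s - t))).prod

open Matrix Finset

section Bprod

variable {n : ℕ} (Ψ : ℕ → Matrix (Fin n) (Fin n) ℝ)

@[simp]
lemma Bprod_zero (s : ℕ) : Bprod Ψ s 0 = 1 := by
  simp [Bprod]

lemma Bprod_succ (s l : ℕ) : Bprod Ψ s (l + 1) = Ψ s * Bprod Ψ (s - 1) l := by
  simp only [Bprod, List.range_succ_eq_map, List.map_cons, List.map_map, List.prod_cons,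
    Nat.sub_zero]
  congr 2
  exact List.map_congr_left fun t _ => congrArg Ψ (by omega)

lemma Bprod_succ' (s l : ℕ) : Bprod Ψ s (l + 1) = Bprod Ψ s l * Ψ (s - l) := by
  simp [Bprod, List.range_succ]

lemma Bprod_add_two (s l : ℕ) :
    Bprod Ψ s (l + 2) = Ψ s * Bprod Ψ (s - 1) l * Ψ (s - 1 - l) := by
  rw [Bprod_succ, Bprod_succ', mul_assoc]

end Bprod

section Bidiag

variable {R : Type*} [Ring R]

def bidiag (Ψ : ℕ → R) : Matrix ℕ ℕ R :=
  of fun j i => if j = i then 1 else if j = i + 1 then -Ψ j else 0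

lemma bidiag_apply_eq_sub (Ψ : ℕ → R) (j i : ℕ) :
    bidiag Ψ j i = (if i = j then 1 else 0) - (if i + 1 = j then Ψ j else 0) := by
  simp only [bidiag, of_apply]
  split_ifs <;> first | omega | simp

lemma bidiag_apply_mul_mul {m : ℕ} (hm : 2 ≤ m) (Ψ : ℕ → R) (k i : ℕ) :
    bidiag Ψ (k * m) (i * m) = if k = i then 1 else 0 := by
  have hkm : k * m ≠ i * m + 1 := fun h => by
    have := congrArg (· % m) h
    simp [Nat.add_mod, Nat.mod_eq_of_lt (show 1 < m by omega)] at this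
  simp [bidiag, hkm, Nat.mul_left_inj (show m ≠ 0 by omega)]

variable {N : ℕ} (P : ℕ → Prop) [DecidablePred P] [Fintype {k : Fin (N + 1) // P k}]

lemma sum_subtype_ite_val_eq {M : Type*} [AddCommMonoid M] (a : ℕ) (x : ℕ → M) :
    ∑ k : {k : Fin (N + 1) // P k}, (if (k : ℕ) = a then x k else 0) =
      if a ≤ N ∧ P a then x a else 0 := by
  split_ifs with ha
  · rw [Fintype.sum_eq_single ⟨⟨a, by omega⟩, ha.2⟩ fun k hk => if_neg fun h =>
      hk (Subtype.ext (Fin.ext h))]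
    simp
  · refine Finset.sum_eq_zero fun k _ => if_neg ?_
    rintro rfl
    exact ha ⟨Nat.lt_succ_iff.1 k.1.2, k.2⟩

lemma sum_bidiag_mul (Ψ : ℕ → R) {j : ℕ} (hj : j ≤ N) (x : ℕ → R) :
    ∑ k : {k : Fin (N + 1) // P k}, bidiag Ψ j k * x k =
      (if P j then x j else 0) - (if 0 < j ∧ P (j - 1) then Ψ j * x (j - 1) else 0) := by
  simp only [bidiag_apply_eq_sub, sub_mul, ite_mul, one_mul, zero_mul, Finset.sum_sub_distrib]
  rw [sum_subtype_ite_val_eq P j x, if_congr (and_iff_right hj) rfl rfl]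
  congr 1
  cases j with
  | zero => simp
  | succ j =>
    simp only [Nat.add_right_cancel_iff]
    rw [sum_subtype_ite_val_eq P j (fun t => Ψ (j + 1) * x t)]
    simp only [Nat.add_sub_cancel, Nat.zero_lt_succ, true_and]
    exact if_congr (and_iff_right (by omega)) rfl rfl

lemma sum_mul_bidiag (Ψ : ℕ → R) {i : ℕ} (hi : i ≤ N) (x : ℕ → R) :
    ∑ k : {k : Fin (N + 1) // P k}, x k * bidiag Ψ k i =
      (if P i then x i else 0) -
        (if i + 1 ≤ N ∧ P (i + 1) then x (i + 1) * Ψ (i + 1) else 0) := by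
  simp only [bidiag_apply_eq_sub, mul_sub, mul_ite, mul_one, mul_zero, Finset.sum_sub_distrib,
    @eq_comm _ i, @eq_comm _ (i + 1)]
  rw [sum_subtype_ite_val_eq P i x, if_congr (and_iff_right hi) rfl rfl,
    sum_subtype_ite_val_eq P (i + 1) (fun t => x t * Ψ t)]

end Bidiag

lemma forall_mem_Icc_not_dvd_iff {m : ℕ} (hm : 2 ≤ m) (k i : ℕ) :
    (i * m + 1 ≤ k * m - 1 ∧ ∀ t ∈ Icc (i * m + 1) (k * m - 1), ¬ m ∣ t) ↔
      k = i + 1 := by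
  constructor
  · rintro ⟨hle, h⟩
    have hik : i < k := Nat.lt_of_mul_lt_mul_right (a := m) (by omega)
    by_contra hne
    have : (i + 2) * m ≤ k * m := Nat.mul_le_mul_right m (by omega)
    rw [add_mul] at this
    exact h ((i + 1) * m) (mem_Icc.2 ⟨by rw [add_one_mul]; omega, by rw [add_one_mul]; omega⟩)
      (dvd_mul_left m _)
  · rintro rfl
    rw [add_one_mul]
    refine ⟨by omega, fun t ht ⟨q, hq⟩ => ?_⟩
    rw [mem_Icc, hq] at ht
    have h1 : i < q := Nat.lt_of_mul_lt_mul_left (a := m) (by rw [mul_comm m i]; omega)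
    have h2 : q < i + 1 :=
      Nat.lt_of_mul_lt_mul_left (a := m) (by rw [mul_add_one, mul_comm m i]; omega)
    omega

section BidiagInvOn

variable {n : ℕ} (P : ℕ → Prop) [DecidablePred P] (Ψ : ℕ → Matrix (Fin n) (Fin n) ℝ)

/-- The inverse of the restriction of `bidiag Ψ` to the points satisfying `P`: that
restriction is block diagonal, with one unit lower bidiagonal block per run of consecutive
`P`-points. -/
def bidiagInvOn : Matrix ℕ ℕ (Matrix (Fin n) (Fin n) ℝ) :=
  of fun j i => if i ≤ j ∧ ∀ t ∈ Icc i j, P t then Bprod Ψ j (j - i) else 0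

lemma bidiagInvOn_sub_mul {j i : ℕ} (hj : P j) (hi : P i) :
    bidiagInvOn P Ψ j i - (if 0 < j ∧ P (j - 1) then Ψ j * bidiagInvOn P Ψ (j - 1) i else 0) =
      if j = i then 1 else 0 := by
  rcases lt_trichotomy i j with hij | rfl | hij
  · rw [if_neg hij.ne']
    by_cases hp : P (j - 1)
    · have hrun :
          (i ≤ j ∧ ∀ t ∈ Icc i j, P t) ↔ (i ≤ j - 1 ∧ ∀ t ∈ Icc i (j - 1), P t) := by
        refine ⟨fun ⟨_, h⟩ => ⟨by omega, fun t ht => h t ?_⟩,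
          fun ⟨_, h⟩ => ⟨by omega, fun t ht => ?_⟩⟩
        · simp only [mem_Icc] at ht ⊢; omega
        · rcases eq_or_ne t j with rfl | htj
          · exact hj
          · exact h t (by simp only [mem_Icc] at ht ⊢; omega)
      simp only [bidiagInvOn, of_apply, if_pos (And.intro (by omega : 0 < j) hp),
        if_congr hrun rfl rfl]
      split_ifs
      · rw [show j - i = j - 1 - i + 1 by omega, Bprod_succ, sub_self]
      · simp
    · have : ¬ ∀ t ∈ Icc i j, P t := fun h => hp (h _ (mem_Icc.2 ⟨by omega, by omega⟩))
      simp only [bidiagInvOn, of_apply, this, hp, and_false, if_false, sub_zero]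
  · have hself : ∀ t ∈ Icc i i, P t := by simpa using hi
    simp only [bidiagInvOn, of_apply, if_pos (And.intro le_rfl hself), Nat.sub_self,
      Bprod_zero]
    split_ifs <;> first | omega | simp
  · simp only [bidiagInvOn, of_apply, if_neg hij.ne]
    split_ifs <;> first | omega | simp

variable {N : ℕ} [Fintype {k : Fin (N + 1) // P k}]

theorem bidiag_restrict_mul_bidiagInvOn_restrict :
    (of fun j i : {k : Fin (N + 1) // P k} => bidiag Ψ j i) *
      (of fun j i : {k : Fin (N + 1) // P k} => bidiagInvOn P Ψ j i) = 1 := by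
  ext1 j i
  simp only [mul_apply, of_apply]
  rw [sum_bidiag_mul P Ψ (Nat.lt_succ_iff.1 j.1.2) (fun t => bidiagInvOn P Ψ t i), if_pos j.2,
    bidiagInvOn_sub_mul P Ψ j.2 i.2, one_apply]
  simp only [Subtype.ext_iff, Fin.val_inj]

end BidiagInvOn

lemma sum_bidiag_mul_bidiagInvOn_mul_bidiag {n N m : ℕ} (hm : 2 ≤ m)
    (Ψ : ℕ → Matrix (Fin n) (Fin n) ℝ) [Fintype {t : Fin (N + 1) // ¬ m ∣ (t : ℕ)}]
    {k i : ℕ} (hk : k * m ≤ N) (hi : i * m ≤ N) :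
    ∑ g : {t : Fin (N + 1) // ¬ m ∣ (t : ℕ)},
      (∑ f : {t : Fin (N + 1) // ¬ m ∣ (t : ℕ)},
        bidiag Ψ (k * m) f * bidiagInvOn (¬ m ∣ ·) Ψ f g) * bidiag Ψ g (i * m) =
      if k = i + 1 then Bprod Ψ (k * m) m else 0 := by
  have hrow : ∀ g : ℕ, ∑ f : {t : Fin (N + 1) // ¬ m ∣ (t : ℕ)},
      bidiag Ψ (k * m) f * bidiagInvOn (¬ m ∣ ·) Ψ f g =
        -(if 0 < k * m ∧ ¬ m ∣ (k * m - 1) then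
          Ψ (k * m) * bidiagInvOn (¬ m ∣ ·) Ψ (k * m - 1) g else 0) := fun g => by
    rw [sum_bidiag_mul (¬ m ∣ ·) Ψ hk (fun t => bidiagInvOn (¬ m ∣ ·) Ψ t g),
      if_neg (not_not.2 (dvd_mul_left m k)), zero_sub]
  simp only [hrow]
  rw [sum_mul_bidiag (¬ m ∣ ·) Ψ hi (fun g => -(if 0 < k * m ∧ ¬ m ∣ (k * m - 1) then
      Ψ (k * m) * bidiagInvOn (¬ m ∣ ·) Ψ (k * m - 1) g else 0)),
    if_neg (not_not.2 (dvd_mul_left m i)), zero_sub]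
  by_cases hrun : i * m + 1 ≤ k * m - 1 ∧ ∀ t ∈ Icc (i * m + 1) (k * m - 1), ¬ m ∣ t
  · obtain rfl := (forall_mem_Icc_not_dvd_iff hm k i).1 hrun
    have hfirst : i * m + 1 ≤ N ∧ ¬ m ∣ i * m + 1 :=
      ⟨by omega, hrun.2 _ (left_mem_Icc.2 hrun.1)⟩
    have hlast : 0 < (i + 1) * m ∧ ¬ m ∣ (i + 1) * m - 1 :=
      ⟨by omega, hrun.2 _ (right_mem_Icc.2 hrun.1)⟩
    simp only [bidiagInvOn, of_apply, if_pos hfirst, if_pos hlast, if_pos hrun, neg_mul,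
      neg_neg]
    have hsplit := Bprod_add_two Ψ ((i + 1) * m) (m - 2)
    rw [Nat.sub_add_cancel hm] at hsplit
    rw [hsplit]
    congr 3 <;> rw [add_one_mul] <;> omega
  · simp only [bidiagInvOn, of_apply, if_neg hrun,
      if_neg (mt (forall_mem_Icc_not_dvd_iff hm k i).2 hrun)]
    simp

open Matrix in
theorem stmt_6_general {n N m Nc : ℕ} (hm : 2 ≤ m)
    (Ψ : ℕ → Matrix (Fin n) (Fin n) ℝ)
    (A : Matrix (Fin (N + 1)) (Fin (N + 1)) (Matrix (Fin n) (Fin n) ℝ))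
    (hA : ∀ j i : Fin (N + 1), A j i =
      if (j : ℕ) = (i : ℕ) then 1
      else if (j : ℕ) = (i : ℕ) + 1 then -(Ψ (j : ℕ)) else 0)
    (c : Fin (Nc + 1) → Fin (N + 1)) (hc : ∀ k, (c k : ℕ) = (k : ℕ) * m) :
    ∃ B : Matrix {j : Fin (N + 1) // ¬ m ∣ (j : ℕ)}
        {j : Fin (N + 1) // ¬ m ∣ (j : ℕ)} (Matrix (Fin n) (Fin n) ℝ),
      (A.submatrix Subtype.val Subtype.val) * B = 1 ∧
      B * (A.submatrix Subtype.val Subtype.val) = 1 ∧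
      A.submatrix c c -
          (A.submatrix c (Subtype.val : {j : Fin (N + 1) // ¬ m ∣ (j : ℕ)} → Fin (N + 1))) * B *
            (A.submatrix (Subtype.val : {j : Fin (N + 1) // ¬ m ∣ (j : ℕ)} → Fin (N + 1)) c) =
        Matrix.of (fun k i : Fin (Nc + 1) =>
          if (k : ℕ) = (i : ℕ) then 1
          else if (k : ℕ) = (i : ℕ) + 1 then -(Bprod Ψ ((k : ℕ) * m) m)
          else 0) := by
  obtain rfl : A = (bidiag Ψ).submatrix Fin.val Fin.val := Matrix.ext fun j i => hA j i
  have hinv := bidiag_restrict_mul_bidiagInvOn_restrict (N := N) (¬ m ∣ ·) Ψ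
  -- `Matrix (Fin n) (Fin n) ℝ` is stably finite, so one-sided inverses of block matrices
  -- are two-sided.
  refine ⟨_, hinv, mul_eq_one_comm.1 hinv, ?_⟩
  ext1 k i
  have hC : ∀ k : Fin (Nc + 1), (k : ℕ) * m ≤ N := fun k => hc k ▸ Nat.lt_succ_iff.1 (c k).2
  simp only [Matrix.sub_apply, mul_apply, submatrix_apply, of_apply, hc]
  rw [sum_bidiag_mul_bidiagInvOn_mul_bidiag hm Ψ (hC k) (hC i), bidiag_apply_mul_mul hm]
  split_ifs <;> first | omega | simp

open Matrix in
/-- Schur complement identity: eliminating the F-points (indices not divisible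
by `m`) from the block unit lower bidiagonal time-stepping matrix yields the
block unit lower bidiagonal matrix whose subdiagonal blocks are the products
`−𝓑_{Ψ,km}^m` of `m` consecutive fine-grid propagators. -/
theorem stmt_6 {n N m Nc : ℕ} (hm : 2 ≤ m) (hN : N = m * Nc)
    (Ψ : ℕ → Matrix (Fin n) (Fin n) ℝ)
    (A : Matrix (Fin (N + 1)) (Fin (N + 1)) (Matrix (Fin n) (Fin n) ℝ))
    (hA : ∀ j i : Fin (N + 1), A j i =
      if (j : ℕ) = (i : ℕ) then 1
      else if (j : ℕ) = (i : ℕ) + 1 then -(Ψ (j : ℕ)) else 0)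
    (c : Fin (Nc + 1) → Fin (N + 1)) (hc : ∀ k, (c k : ℕ) = (k : ℕ) * m) :
    ∃ B : Matrix {j : Fin (N + 1) // ¬ m ∣ (j : ℕ)}
        {j : Fin (N + 1) // ¬ m ∣ (j : ℕ)} (Matrix (Fin n) (Fin n) ℝ),
      (A.submatrix Subtype.val Subtype.val) * B = 1 ∧
      B * (A.submatrix Subtype.val Subtype.val) = 1 ∧
      A.submatrix c c -
          (A.submatrix c (Subtype.val : {j : Fin (N + 1) // ¬ m ∣ (j : ℕ)} → Fin (N + 1))) * B *
            (A.submatrix (Subtype.val : {j : Fin (N + 1) // ¬ m ∣ (j : ℕ)} → Fin (N + 1)) c) =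
        Matrix.of (fun k i : Fin (Nc + 1) =>
          if (k : ℕ) = (i : ℕ) then 1
          else if (k : ℕ) = (i : ℕ) + 1 then -(Bprod Ψ ((k : ℕ) * m) m)
          else 0) :=
  stmt_6_general hm Ψ A hA c hc
end

section
/- For any real numbers $\mu^{(1)}, \ldots, \mu^{(N_c)}$ with $\mu^* := \max_j |\mu^{(j)}| < 1$ and $\mu^\ddagger := \min_j \mu^{(j)}$, and any real numbers $\lambda^{(1)}, \ldots, \lambda^{(N)}$ with $\lambda^\dagger := \max_j |\lambda^{(j)}|$, let $\mathcal{S}_i = \prod_{j=im+1}^{(i+1)m} \lambda^{(j)}$, $\mathcal{Q}_{k-2}^k = 1$ and $\mathcal{Q}_i^k = \prod_{j=i+3}^{k} \mu^{(j)}$ for $i \le k-3$, and assume $|\mathcal{S}_{i+1} - \mu^{(i+2)}| \le |(\lambda^\dagger)^m - \mu^\ddagger|$; then the $(N_c+1)\times(N_c+1)$ lower triangular matrix $\mathcal{J}$ with entries $\mathcal{J}_{k,i} = \mathcal{Q}_i^k (\mathcal{S}_{i+1} - \mu^{(i+2)}) \mathcal{S}_i$ for $0 \le i \le k-2$ and $\mathcal{J}_{k,i}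 = 0$ otherwise satisfies $\|\mathcal{J}\|_2 \le (\lambda^\dagger)^m \, |(\lambda^\dagger)^m - \mu^\ddagger| \, \frac{1 - (\mu^*)^{N_c-1}}{1 - \mu^*}$. -/
open Finset

section MGRITAux

private lemma geom_le_aux {mus : ℝ} (h0 : 0 ≤ mus) (h1 : mus < 1) {a b : ℕ} (hab : a ≤ b) :
    ∑ t ∈ range a, mus ^ t ≤ (1 - mus ^ b) / (1 - mus) := by
  have hsub : ∑ t ∈ range a, mus ^ t ≤ ∑ t ∈ range b, mus ^ t :=
    Finset.sum_le_sum_of_subset_of_nonneg (Finset.range_subset_range.2 hab)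
      (fun i _ _ => pow_nonneg h0 i)
  have hg : ∑ t ∈ range b, mus ^ t = (1 - mus ^ b) / (1 - mus) := by
    rw [geom_sum_eq h1.ne]
    have hne : mus - 1 ≠ 0 := by intro h; apply h1.ne; linarith
    have hne2 : (1 : ℝ) - mus ≠ 0 := by intro h; apply h1.ne; linarith
    field_simp
    ring
  linarith

private lemma row_sum_le {mus : ℝ} (h0 : 0 ≤ mus) (h1 : mus < 1) {Nc k : ℕ}
    (hk : k ≤ Nc) :
    ∑ i ∈ range (Nc + 1), (if i + 2 ≤ k then mus ^ (k - 2 - i) else 0)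
      ≤ (1 - mus ^ (Nc - 1)) / (1 - mus) := by
  rw [← Finset.sum_filter]
  have hfil : (range (Nc + 1)).filter (fun i => i + 2 ≤ k) = range (k - 1) := by
    ext i; simp only [mem_filter, mem_range]; omega
  rw [hfil]
  have hrefl : ∑ i ∈ range (k - 1), mus ^ (k - 2 - i) = ∑ t ∈ range (k - 1), mus ^ t := by
    rw [← Finset.sum_range_reflect (fun t => mus ^ t) (k - 1)]
    exact Finset.sum_congr rfl fun i hi => by congr 1
  rw [hrefl]
  exact geom_le_aux h0 h1 (by omega)

private lemma col_sum_le {mus : ℝ} (h0 : 0 ≤ mus) (h1 : mus < 1) {Nc i : ℕ} :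
    ∑ k ∈ range (Nc + 1), (if i + 2 ≤ k then mus ^ (k - 2 - i) else 0)
      ≤ (1 - mus ^ (Nc - 1)) / (1 - mus) := by
  rw [← Finset.sum_filter]
  have hfil : (range (Nc + 1)).filter (fun k => i + 2 ≤ k) = Ico (i + 2) (Nc + 1) := by
    ext k; simp only [mem_filter, mem_range, mem_Ico]; omega
  rw [hfil, Finset.sum_Ico_eq_sum_range]
  have : ∑ t ∈ range (Nc + 1 - (i + 2)), mus ^ (i + 2 + t - 2 - i)
      = ∑ t ∈ range (Nc + 1 - (i + 2)), mus ^ t :=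
    Finset.sum_congr rfl fun t _ => by congr 1; omega
  rw [this]
  exact geom_le_aux h0 h1 (by omega)

private lemma schur_test {n : Type*} [Fintype n] [DecidableEq n] (A : Matrix n n ℝ) (C : ℝ)
    (hC : 0 ≤ C)
    (hrow : ∀ k, ∑ i, |A k i| ≤ C) (hcol : ∀ i, ∑ k, |A k i| ≤ C) :
    ‖Matrix.toEuclideanCLM (𝕜 := ℝ) A‖ ≤ C := by
  refine ContinuousLinearMap.opNorm_le_bound _ hC (fun x => ?_)
  have hy : ∀ k, (Matrix.toEuclideanCLM (𝕜 := ℝ) A x) k = ∑ i, A k i * x i := fun _ => rfl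
  have h1 : ∀ k, (∑ i, A k i * x i) ^ 2 ≤ (∑ i, |A k i|) * (∑ i, |A k i| * (x i) ^ 2) := by
    intro k
    calc (∑ i, A k i * x i) ^ 2 ≤ (∑ i, |A k i| * |x i|) ^ 2 := by
          rw [← sq_abs (∑ i, A k i * x i)]
          refine pow_le_pow_left₀ (abs_nonneg _) ?_ 2
          refine (Finset.abs_sum_le_sum_abs _ _).trans (le_of_eq ?_)
          simp [abs_mul]
      _ = (∑ i, Real.sqrt |A k i| * (Real.sqrt |A k i| * |x i|)) ^ 2 := by
          congr 1
          refine Finset.sum_congr rfl fun i _ => ?_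
          rw [← mul_assoc, Real.mul_self_sqrt (abs_nonneg _)]
      _ ≤ (∑ i, Real.sqrt |A k i| ^ 2) * ∑ i, (Real.sqrt |A k i| * |x i|) ^ 2 :=
          Finset.sum_mul_sq_le_sq_mul_sq _ _ _
      _ = (∑ i, |A k i|) * (∑ i, |A k i| * (x i) ^ 2) := by
          congr 1
          · exact Finset.sum_congr rfl fun i _ => Real.sq_sqrt (abs_nonneg _)
          · refine Finset.sum_congr rfl fun i _ => ?_
            rw [mul_pow, Real.sq_sqrt (abs_nonneg _), sq_abs]
  have main : ∑ k, (∑ i, A k i * x i) ^ 2 ≤ C ^ 2 * ∑ i, (x i) ^ 2 := by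
    calc ∑ k, (∑ i, A k i * x i) ^ 2
        ≤ ∑ k, (∑ i, |A k i|) * (∑ i, |A k i| * (x i) ^ 2) :=
          Finset.sum_le_sum fun k _ => h1 k
      _ ≤ ∑ k, C * (∑ i, |A k i| * (x i) ^ 2) := by
          refine Finset.sum_le_sum fun k _ => ?_
          exact mul_le_mul_of_nonneg_right (hrow k)
            (Finset.sum_nonneg fun i _ => mul_nonneg (abs_nonneg _) (sq_nonneg _))
      _ = C * ∑ i, (∑ k, |A k i|) * (x i) ^ 2 := by
          rw [← Finset.mul_sum, Finset.sum_comm]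
          congr 1
          exact Finset.sum_congr rfl fun i _ => (Finset.sum_mul _ _ _).symm
      _ ≤ C * ∑ i, C * (x i) ^ 2 := by
          refine mul_le_mul_of_nonneg_left (Finset.sum_le_sum fun i _ => ?_) hC
          exact mul_le_mul_of_nonneg_right (hcol i) (sq_nonneg _)
      _ = C ^ 2 * ∑ i, (x i) ^ 2 := by rw [← Finset.mul_sum]; ring
  have hnx : ‖x‖ = Real.sqrt (∑ i, (x i) ^ 2) := by
    rw [EuclideanSpace.norm_eq]
    congr 1
    exact Finset.sum_congr rfl fun i _ => by rw [Real.norm_eq_abs, sq_abs]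
  have hny : ‖Matrix.toEuclideanCLM (𝕜 := ℝ) A x‖
      = Real.sqrt (∑ k, (∑ i, A k i * x i) ^ 2) := by
    rw [EuclideanSpace.norm_eq]
    congr 1
    exact Finset.sum_congr rfl fun k _ => by rw [hy, Real.norm_eq_abs, sq_abs]
  rw [hny, hnx]
  calc Real.sqrt (∑ k, (∑ i, A k i * x i) ^ 2)
      ≤ Real.sqrt (C ^ 2 * ∑ i, (x i) ^ 2) := Real.sqrt_le_sqrt main
    _ = C * Real.sqrt (∑ i, (x i) ^ 2) := by
        rw [Real.sqrt_mul (sq_nonneg _), Real.sqrt_sq hC]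

end MGRITAux

open Matrix Finset in
/-- Per-eigenmode spectral bound on the two-level MGRIT error-propagation
matrix `𝒥` (Theorem 3.1): with fine eigenvalues `lam j` bounded by `lamd`,
coarse eigenvalues `mu j` bounded in modulus by `mus < 1`, and
`|S_{i+1} − mu_{i+2}| ≤ |lamd^m − mud|` where `mud = min_j mu j`, one has
`‖𝒥‖₂ ≤ lamd^m |lamd^m − mud| (1 − mus^(Nc−1))/(1 − mus)`. -/
theorem stmt_7 {N m Nc : ℕ} (hm : 1 ≤ m) (hNc : 1 ≤ Nc) (hN : N = m * Nc)
    (mu lam : ℕ → ℝ) (mus lamd mud : ℝ)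
    (hmus : ∀ j ∈ Finset.Icc 1 Nc, |mu j| ≤ mus) (hmus1 : mus < 1)
    (hlamd : ∀ j ∈ Finset.Icc 1 N, |lam j| ≤ lamd)
    (hmud : ∀ j ∈ Finset.Icc 1 Nc, mud ≤ mu j)
    (S : ℕ → ℝ) (hS : ∀ i, S i = ∏ j ∈ Finset.Icc (i * m + 1) ((i + 1) * m), lam j)
    (hSmu : ∀ i, i + 2 ≤ Nc → |S (i + 1) - mu (i + 2)| ≤ |lamd ^ m - mud|)
    (J : Matrix (Fin (Nc + 1)) (Fin (Nc + 1)) ℝ)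
    (hJ : ∀ k i : Fin (Nc + 1), J k i =
      if (i : ℕ) + 2 ≤ (k : ℕ) then
        (∏ j ∈ Finset.Icc ((i : ℕ) + 3) (k : ℕ), mu j) *
          (S ((i : ℕ) + 1) - mu ((i : ℕ) + 2)) * S (i : ℕ)
      else 0) :
    ‖Matrix.toEuclideanCLM (𝕜 := ℝ) J‖ ≤
      lamd ^ m * |lamd ^ m - mud| * ((1 - mus ^ (Nc - 1)) / (1 - mus)) := by
  -- basic nonnegativity facts
  have hmus0 : 0 ≤ mus := le_trans (abs_nonneg _) (hmus 1 (by simp [hNc]))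
  have hlamd0 : 0 ≤ lamd := by
    refine le_trans (abs_nonneg (lam 1)) (hlamd 1 ?_)
    simp only [Finset.mem_Icc]
    constructor
    · exact le_refl 1
    · subst hN; exact Nat.one_le_iff_ne_zero.2 (by positivity)
  have hgeom0 : 0 ≤ (1 - mus ^ (Nc - 1)) / (1 - mus) := by
    apply div_nonneg
    · have : mus ^ (Nc - 1) ≤ 1 := pow_le_one₀ hmus0 hmus1.le
      linarith
    · linarith
  set c : ℝ := lamd ^ m * |lamd ^ m - mud| with hc
  have hc0 : 0 ≤ c := mul_nonneg (pow_nonneg hlamd0 m) (abs_nonneg _)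
  -- entrywise bound
  have hentry : ∀ k i : Fin (Nc + 1),
      |J k i| ≤ c * (if (i : ℕ) + 2 ≤ (k : ℕ) then mus ^ ((k : ℕ) - 2 - (i : ℕ)) else 0) := by
    intro k i
    rw [hJ k i]
    by_cases h : (i : ℕ) + 2 ≤ (k : ℕ)
    · simp only [h, if_true]
      have hkNc : (k : ℕ) ≤ Nc := by omega
      have hQ : |∏ j ∈ Finset.Icc ((i : ℕ) + 3) (k : ℕ), mu j|
          ≤ mus ^ ((k : ℕ) - 2 - (i : ℕ)) := by
        rw [Finset.abs_prod]
        calc ∏ j ∈ Finset.Icc ((i : ℕ) + 3) (k : ℕ), |mu j|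
            ≤ ∏ _j ∈ Finset.Icc ((i : ℕ) + 3) (k : ℕ), mus := by
              refine Finset.prod_le_prod (fun j _ => abs_nonneg _) (fun j hj => ?_)
              refine hmus j ?_
              simp only [Finset.mem_Icc] at hj ⊢
              omega
          _ = mus ^ ((k : ℕ) - 2 - (i : ℕ)) := by
              rw [Finset.prod_const, Nat.card_Icc]
              congr 1
              omega
      have hD : |S ((i : ℕ) + 1) - mu ((i : ℕ) + 2)| ≤ |lamd ^ m - mud| :=
        hSmu (i : ℕ) (by omega)
      have hSb : |S (i : ℕ)| ≤ lamd ^ m := by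
        rw [hS, Finset.abs_prod]
        calc ∏ j ∈ Finset.Icc ((i : ℕ) * m + 1) (((i : ℕ) + 1) * m), |lam j|
            ≤ ∏ _j ∈ Finset.Icc ((i : ℕ) * m + 1) (((i : ℕ) + 1) * m), lamd := by
              refine Finset.prod_le_prod (fun j _ => abs_nonneg _) (fun j hj => ?_)
              refine hlamd j ?_
              simp only [Finset.mem_Icc] at hj ⊢
              refine ⟨by omega, ?_⟩
              have hiNc : (i : ℕ) + 1 ≤ Nc := by omega
              have h2 : ((i : ℕ) + 1) * m ≤ Nc * m := Nat.mul_le_mul_right m hiNc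
              have hNm : Nc * m = N := by rw [hN, Nat.mul_comm]
              omega
          _ = lamd ^ m := by
              rw [Finset.prod_const, Nat.card_Icc]
              congr 1
              have : ((i : ℕ) + 1) * m = (i : ℕ) * m + m := by ring
              omega
      rw [abs_mul, abs_mul]
      have step : |∏ j ∈ Finset.Icc ((i : ℕ) + 3) (k : ℕ), mu j| *
              |S ((i : ℕ) + 1) - mu ((i : ℕ) + 2)| * |S (i : ℕ)|
          ≤ mus ^ ((k : ℕ) - 2 - (i : ℕ)) * |lamd ^ m - mud| * lamd ^ m := by
        refine mul_le_mul (mul_le_mul hQ hD (abs_nonneg _) (pow_nonneg hmus0 _))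
          hSb (abs_nonneg _) ?_
        exact mul_nonneg (pow_nonneg hmus0 _) (abs_nonneg _)
      refine step.trans (le_of_eq ?_)
      rw [hc]; ring
    · rw [if_neg h, if_neg h, abs_zero, mul_zero]
  -- apply the Schur test
  refine schur_test J _ (mul_nonneg hc0 hgeom0) (fun k => ?_) (fun i => ?_)
  · calc ∑ i, |J k i|
        ≤ ∑ i : Fin (Nc + 1),
            c * (if (i : ℕ) + 2 ≤ (k : ℕ) then mus ^ ((k : ℕ) - 2 - (i : ℕ)) else 0) :=
          Finset.sum_le_sum fun i _ => hentry k i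
      _ = c * ∑ i ∈ range (Nc + 1),
            (if i + 2 ≤ (k : ℕ) then mus ^ ((k : ℕ) - 2 - i) else 0) := by
          rw [← Finset.mul_sum]
          congr 1
          exact Fin.sum_univ_eq_sum_range
            (fun i => if i + 2 ≤ (k : ℕ) then mus ^ ((k : ℕ) - 2 - i) else 0) (Nc + 1)
      _ ≤ c * ((1 - mus ^ (Nc - 1)) / (1 - mus)) := by
          refine mul_le_mul_of_nonneg_left ?_ hc0
          exact row_sum_le hmus0 hmus1 (by omega)
      _ = lamd ^ m * |lamd ^ m - mud| * ((1 - mus ^ (Nc - 1)) / (1 - mus)) := by rw [hc]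
  · calc ∑ k, |J k i|
        ≤ ∑ k : Fin (Nc + 1),
            c * (if (i : ℕ) + 2 ≤ (k : ℕ) then mus ^ ((k : ℕ) - 2 - (i : ℕ)) else 0) :=
          Finset.sum_le_sum fun k _ => hentry k i
      _ = c * ∑ k ∈ range (Nc + 1),
            (if (i : ℕ) + 2 ≤ k then mus ^ (k - 2 - (i : ℕ)) else 0) := by
          rw [← Finset.mul_sum]
          congr 1
          exact Fin.sum_univ_eq_sum_range
            (fun k => if (i : ℕ) + 2 ≤ k then mus ^ (k - 2 - (i : ℕ)) else 0) (Nc + 1)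
      _ ≤ c * ((1 - mus ^ (Nc - 1)) / (1 - mus)) := by
          refine mul_le_mul_of_nonneg_left ?_ hc0
          exact col_sum_le hmus0 hmus1
      _ = lamd ^ m * |lamd ^ m - mud| * ((1 - mus ^ (Nc - 1)) / (1 - mus)) := by rw [hc]
end

section
/- Let $\Psi_1, \ldots, \Psi_N$ be pairwise commuting $n\times n$ matrices and suppose coarse propagators $\Psi^\Delta_1, \ldots, \Psi^\Delta_{N_c}$ also commute with each of the $\Psi_j$ and with each other. Then the block lower bidiagonal Schur complement $\mathcal{A}_\Delta$ (identity diagonal, subdiagonal blocks $-\mathcal{B}_{\Psi,km}^m$) commutes with the block lower triangular matrix $\mathcal{J}$ whose $(k,i)$ block is $\mathcal{Q}_i^k (\mathcal{S}_{i+1} - \Psi^\Delta_{i+2}) \mathcal{S}_i$ for $i \le k-2$ (with $\mathcal{Q}_i^k = \Psi^\Delta_{i+3}\cdots\Psi^\Delta_k$, $\mathcal{S}_i = \Psi_{(i+1)m}\cdots\Psi_{im+1}$), provided all fine propagators are equal ($\Psi_j = \Psi$) and all coarse propagators are equal ($\Psi^\Delta_k = \Psi^\Delta$). -/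
/-!
Both `𝒜_Δ` and `𝒥` are lower triangular Toeplitz matrices, with symbols `1 - Ψ^m X`
and `∑_{d ≥ 2} Ψc^{d-2} (Ψ^m - Ψc) Ψ^m X^d`. The product of two lower triangular Toeplitz
matrices is the lower triangular Toeplitz matrix of the Cauchy product of their symbols, and
that product is symmetric as soon as every coefficient of one symbol commutes with every
coefficient of the other, which holds here because `Ψ` and `Ψc` commute.
-/

open Finset

namespace Matrix

variable {R : Type*}

def lowerToeplitz [Zero R] (N : ℕ) (a : ℕ → R) : Matrix (Fin N) (Fin N) R :=
  of fun k i => if (i : ℕ) ≤ k then a (k - i) else 0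

@[simp]
theorem lowerToeplitz_apply [Zero R] (N : ℕ) (a : ℕ → R) (k i : Fin N) :
    lowerToeplitz N a k i = if (i : ℕ) ≤ k then a (k - i) else 0 :=
  rfl

theorem lowerToeplitz_mul_lowerToeplitz [NonUnitalNonAssocSemiring R] (N : ℕ) (a b : ℕ → R) :
    lowerToeplitz N a * lowerToeplitz N b =
      lowerToeplitz N fun d => ∑ p ∈ antidiagonal d, a p.1 * b p.2 := by
  ext k i
  set F : ℕ → R := fun j =>
    (if j ≤ k then a (k - j) else 0) * (if (i : ℕ) ≤ j then b (j - i) else 0) with hF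
  rw [mul_apply, lowerToeplitz_apply]
  change ∑ j : Fin N, F j = _
  rw [Fin.sum_univ_eq_sum_range F]
  split_ifs with hik
  · have hsupp : ∀ j ∈ range N, j ∉ Ico (i : ℕ) (k + 1) → F j = 0 := by
      intro j _ hj
      rw [mem_Ico, not_and_or, not_le, not_lt] at hj
      rcases hj with hj | hj
      · simp [hF, hj.not_ge]
      · simp [hF, show ¬ j ≤ k by omega]
    have hIco : Ico (i : ℕ) (k + 1) ⊆ range N := fun j hj => by
      rw [mem_Ico] at hj
      rw [mem_range]
      omega
    rw [← sum_subset hIco hsupp, sum_Ico_eq_sum_range, ← Nat.sum_antidiagonal_swap]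
    simp only [Prod.fst_swap, Prod.snd_swap]
    rw [Nat.sum_antidiagonal_eq_sum_range_succ (fun p q => a q * b p),
      show (k : ℕ) + 1 - i = (k - i : ℕ).succ by omega]
    refine sum_congr rfl fun t ht => ?_
    rw [mem_range] at ht
    simp only [hF, show (i : ℕ) + t ≤ k by omega, le_add_iff_nonneg_right, zero_le, if_true]
    congr 2 <;> omega
  · exact sum_eq_zero fun j _ => by
      by_cases hjk : j ≤ k
      · simp [hF, show ¬ (i : ℕ) ≤ j by omega]
      · simp [hF, hjk]

theorem lowerToeplitz_mul_comm [NonUnitalNonAssocSemiring R] (N : ℕ) {a b : ℕ → R}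
    (h : ∀ p q, Commute (a p) (b q)) :
    lowerToeplitz N a * lowerToeplitz N b = lowerToeplitz N b * lowerToeplitz N a := by
  simp only [lowerToeplitz_mul_lowerToeplitz]
  congr 1
  funext d
  rw [← Nat.sum_antidiagonal_swap]
  exact sum_congr rfl fun p _ => (h p.2 p.1).eq

end Matrix

open Matrix in
theorem stmt_19_general {n m Nc : ℕ}
    (Ψ Ψc : Matrix (Fin n) (Fin n) ℝ) (hcomm : Ψ * Ψc = Ψc * Ψ)
    (AΔ J : Matrix (Fin (Nc + 1)) (Fin (Nc + 1)) (Matrix (Fin n) (Fin n) ℝ))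
    (hAΔ : ∀ k i : Fin (Nc + 1), AΔ k i =
      if (k : ℕ) = (i : ℕ) then 1
      else if (k : ℕ) = (i : ℕ) + 1 then -(Ψ ^ m) else 0)
    (hJ : ∀ k i : Fin (Nc + 1), J k i =
      if (i : ℕ) + 2 ≤ (k : ℕ) then
        Ψc ^ ((k : ℕ) - 2 - (i : ℕ)) * (Ψ ^ m - Ψc) * Ψ ^ m
      else 0) :
    AΔ * J = J * AΔ := by
  set a : ℕ → Matrix (Fin n) (Fin n) ℝ :=
    fun d => if d = 0 then 1 else if d = 1 then -(Ψ ^ m) else 0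
  set b : ℕ → Matrix (Fin n) (Fin n) ℝ :=
    fun d => if 2 ≤ d then Ψc ^ (d - 2) * (Ψ ^ m - Ψc) * Ψ ^ m else 0
  have hA : AΔ = lowerToeplitz (Nc + 1) a := by
    ext1 k i
    rw [hAΔ, lowerToeplitz_apply]
    simp only [a]
    split_ifs <;> first | rfl | omega
  have hJ' : J = lowerToeplitz (Nc + 1) b := by
    ext1 k i
    rw [hJ, lowerToeplitz_apply]
    simp only [b]
    split_ifs <;> first | rfl | omega | rw [Nat.sub_right_comm]
  have hΨ : Commute Ψ Ψc := hcomm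
  have hab : ∀ p q, Commute (a p) (b q) := by
    intro p q
    have hblock : ∀ d, Commute (Ψ ^ m) (Ψc ^ d * (Ψ ^ m - Ψc) * Ψ ^ m) := fun d =>
      ((hΨ.pow_pow m d).mul_right ((Commute.refl _).sub_right (hΨ.pow_left m))).mul_right
        (Commute.refl _)
    simp only [a, b]
    split_ifs <;> simp [(hblock _).neg_left]
  rw [hA, hJ', lowerToeplitz_mul_comm _ hab]

open Matrix in
/-- In the uniform-time-step case (all fine propagators equal to `Ψ`, all
coarse propagators equal to `Ψc`, with `Ψ` and `Ψc` commuting), the ideal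
coarse operator `𝒜_Δ` (block unit lower bidiagonal with subdiagonal blocks
`−Ψ^m`) commutes with the MGRIT error-propagation matrix `𝒥` whose `(k,i)`
block is `Ψc^{k−2−i} (Ψ^m − Ψc) Ψ^m` for `i ≤ k − 2`. -/
theorem stmt_19 {n m Nc : ℕ} (hm : 1 ≤ m)
    (Ψ Ψc : Matrix (Fin n) (Fin n) ℝ) (hcomm : Ψ * Ψc = Ψc * Ψ)
    (AΔ J : Matrix (Fin (Nc + 1)) (Fin (Nc + 1)) (Matrix (Fin n) (Fin n) ℝ))
    (hAΔ : ∀ k i : Fin (Nc + 1), AΔ k i =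
      if (k : ℕ) = (i : ℕ) then 1
      else if (k : ℕ) = (i : ℕ) + 1 then -(Ψ ^ m) else 0)
    (hJ : ∀ k i : Fin (Nc + 1), J k i =
      if (i : ℕ) + 2 ≤ (k : ℕ) then
        Ψc ^ ((k : ℕ) - 2 - (i : ℕ)) * (Ψ ^ m - Ψc) * Ψ ^ m
      else 0) :
    AΔ * J = J * AΔ :=
  stmt_19_general Ψ Ψc hcomm AΔ J hAΔ hJ
end
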